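/- For every ζ > 0, the family (Lₙ(ζ))_{n ∈ ℤ} is absolutely summable, i.e. ∑_{n ∈ ℤ} |Lₙ(ζ)| < ∞, and for every real Θ the Fourier series converges to the function it represents: ∑_{n ∈ ℤ} Lₙ(ζ) · e^{inΘ} = |1 + ζe^{−iΘ}| · (1 + ζe^{−iΘ}). -/

import Mathlib

/-!
The map `φ z = ‖z‖ • z` is `C¹` on any real inner product space: away from `0` it is smooth, and
at `0` its derivative vanishes, with `‖Dφ z‖ ≤ 2 ‖z‖`. Hence `Θ ↦ ‖1 + ζ e^{-iΘ}‖ (1 + ζ e^{-iΘ})`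
is a `C¹` periodic function. Integrating by parts, its `n`-th Fourier coefficient is that of its
derivative divided by `i n`; Parseval for the derivative and `2xy ≤ x² + y²` then make the
coefficients absolutely summable, and an absolutely convergent Fourier series of a continuous
function converges to it everywhere.
-/

open Real

/-- The `n`-th Fourier coefficient
`Lₙ(ζ) = (1/(2π)) ∫₀^{2π} |1 + ζe^{-iΘ}| (1 + ζe^{-iΘ}) e^{-inΘ} dΘ`. -/
noncomputable def fourierL (n : ℤ) (ζ : ℝ) : ℂ :=
  (1 / (2 * π)) * ∫ Θ in (0:ℝ)..(2 * π),
    (‖1 + (ζ : ℂ) * Complex.exp (-Complex.I * Θ)‖ : ℂ)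
      * (1 + (ζ : ℂ) * Complex.exp (-Complex.I * Θ))
      * Complex.exp (-Complex.I * n * Θ)

open MeasureTheory Set Function Asymptotics Topology
open scoped Interval

section NormSmulSelf

variable {E : Type*} [NormedAddCommGroup E] [InnerProductSpace ℝ E]

theorem hasFDerivAt_norm_smul_self_zero :
    HasFDerivAt (fun x : E => ‖x‖ • x) (0 : E →L[ℝ] E) 0 := by
  refine .of_isLittleO ?_
  simp only [norm_zero, zero_smul, sub_zero, zero_apply]
  have h : (fun x : E => ‖x‖) =o[𝓝 0] (fun _ => (1 : ℝ)) :=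
    (isLittleO_one_iff ℝ).2 (by simpa using (continuous_norm (E := E)).tendsto 0)
  simpa using h.smul_isBigO (isBigO_refl (fun x : E => x) (𝓝 0))

theorem norm_fderiv_norm_smul_self_le (x : E) :
    ‖fderiv ℝ (fun x : E => ‖x‖ • x) x‖ ≤ 2 * ‖x‖ := by
  rcases eq_or_ne x 0 with rfl | hx
  · simp [hasFDerivAt_norm_smul_self_zero.fderiv]
  have hnorm := (contDiffAt_norm ℝ hx (n := 1)).differentiableAt one_ne_zero
  have hderiv : HasFDerivAt (fun x : E => ‖x‖ • x)
      (‖x‖ • ContinuousLinearMap.id ℝ E + (fderiv ℝ norm x).smulRight x) x :=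
    hnorm.hasFDerivAt.smul (hasFDerivAt_id x)
  have hid : ‖ContinuousLinearMap.id ℝ E‖ ≤ 1 := ContinuousLinearMap.norm_id_le
  have hnorm' : ‖fderiv ℝ norm x‖ ≤ 1 := by
    simpa using norm_fderiv_le_of_lipschitz ℝ (lipschitzWith_one_norm (E := E)) (x₀ := x)
  rw [hderiv.fderiv]
  calc _ ≤ ‖x‖ * ‖ContinuousLinearMap.id ℝ E‖ + ‖fderiv ℝ norm x‖ * ‖x‖ := by
        refine (norm_add_le _ _).trans (add_le_add ?_ ?_)
        · rw [norm_smul, norm_norm]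
        · exact (ContinuousLinearMap.norm_smulRight_apply _ _).le
    _ ≤ ‖x‖ * 1 + 1 * ‖x‖ := by gcongr
    _ = 2 * ‖x‖ := by ring

theorem contDiff_norm_smul_self : ContDiff ℝ 1 (fun x : E => ‖x‖ • x) := by
  rw [contDiff_one_iff_fderiv]
  have hsmooth {x : E} (hx : x ≠ 0) : ContDiffAt ℝ 1 (fun x : E => ‖x‖ • x) x :=
    (contDiffAt_norm ℝ hx).smul contDiffAt_id
  refine ⟨fun x => ?_, continuous_iff_continuousAt.2 fun x => ?_⟩
  · rcases eq_or_ne x 0 with rfl | hx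
    · exact hasFDerivAt_norm_smul_self_zero.differentiableAt
    · exact (hsmooth hx).differentiableAt one_ne_zero
  · rcases eq_or_ne x 0 with rfl | hx
    · rw [ContinuousAt, hasFDerivAt_norm_smul_self_zero.fderiv, tendsto_zero_iff_norm_tendsto_zero]
      refine squeeze_zero (fun _ => norm_nonneg _) norm_fderiv_norm_smul_self_le ?_
      simpa using ((continuous_norm (E := E)).tendsto 0).const_mul 2
    · exact (hsmooth hx).continuousAt_fderiv one_ne_zero

end NormSmulSelf

section FourierCoeffOn

variable {a b : ℝ} {f f' : ℝ → ℂ}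

theorem norm_fourierCoeffOn_of_hasDerivAt (hab : a < b) {n : ℤ} (hn : n ≠ 0)
    (hf : ∀ x ∈ [[a, b]], HasDerivAt f (f' x) x) (hf' : IntervalIntegrable f' volume a b)
    (hfab : f a = f b) :
    ‖fourierCoeffOn hab f n‖ = (b - a) / (2 * π * |(n : ℝ)|) * ‖fourierCoeffOn hab f' n‖ := by
  rw [fourierCoeffOn_of_hasDerivAt hab hn hf hf', hfab, sub_self, mul_zero, zero_sub, norm_mul,
    norm_neg, norm_mul, ← Complex.ofReal_sub, Complex.norm_real,
    norm_of_nonneg (sub_pos.2 hab).le]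
  simp [abs_of_pos pi_pos, field]

theorem summable_norm_fourierCoeffOn_of_hasDerivAt (hab : a < b)
    (hf : ∀ x ∈ [[a, b]], HasDerivAt f (f' x) x) (hf' : MemLp f' 2 (volume.restrict (Ioc a b)))
    (hfab : f a = f b) :
    Summable fun n : ℤ => ‖fourierCoeffOn hab f n‖ := by
  have hf'int : IntervalIntegrable f' volume a b :=
    (intervalIntegrable_iff_integrableOn_Ioc_of_le hab.le).2 (hf'.integrable one_le_two)
  set C := (b - a) / (2 * π)
  have hbound : ∀ n : ℤ, n ≠ 0 →
      ‖fourierCoeffOn hab f n‖ ≤ C / 2 * (‖fourierCoeffOn hab f' n‖ ^ 2 + 1 / (n : ℝ) ^ 2) := by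
    intro n hn
    have hamgm := two_mul_le_add_sq ‖fourierCoeffOn hab f' n‖ (1 / |(n : ℝ)|)
    rw [div_pow, one_pow, sq_abs] at hamgm
    have hC : 0 ≤ C := div_nonneg (sub_pos.2 hab).le two_pi_pos.le
    rw [norm_fourierCoeffOn_of_hasDerivAt hab hn hf hf'int hfab]
    calc (b - a) / (2 * π * |(n : ℝ)|) * ‖fourierCoeffOn hab f' n‖
        = C / 2 * (2 * ‖fourierCoeffOn hab f' n‖ * (1 / |(n : ℝ)|)) := by
          simp only [C]
          field_simp
      _ ≤ _ := by gcongr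
  refine .of_norm_bounded_eventually
    (((hasSum_sq_fourierCoeffOn hab hf').summable.add
      (summable_one_div_int_pow.2 one_lt_two)).mul_left (C / 2)) ?_
  filter_upwards [Filter.eventually_cofinite_ne 0] with n hn
  simpa using hbound n hn

theorem summable_norm_fourierCoeffOn_of_contDiff (hab : a < b) (hf : ContDiff ℝ 1 f)
    (hper : Periodic f (b - a)) :
    Summable fun n : ℤ => ‖fourierCoeffOn hab f n‖ := by
  have hf' : Continuous (deriv f) := hf.continuous_deriv le_rfl
  obtain ⟨C, hC⟩ := (isCompact_Icc (a := a) (b := b)).exists_bound_of_continuousOn hf'.continuousOn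
  refine summable_norm_fourierCoeffOn_of_hasDerivAt hab
    (fun x _ => (hf.differentiable one_ne_zero x).hasDerivAt)
    (.of_bound hf'.aestronglyMeasurable C
      (ae_restrict_of_forall_mem measurableSet_Ioc fun x hx => hC x (Ioc_subset_Icc_self hx))) ?_
  simpa using (hper a).symm

theorem hasSum_fourierCoeffOn_of_summable (hab : a < b) (hf : Continuous f)
    (hper : Periodic f (b - a)) (hsum : Summable (fourierCoeffOn hab f)) (x : ℝ) :
    HasSum (fun n : ℤ => fourierCoeffOn hab f n • fourier n (x : AddCircle (b - a))) (f x) := by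
  have : Fact (0 < b - a) := ⟨sub_pos.2 hab⟩
  let F : C(AddCircle (b - a), ℂ) := ⟨hper.lift, continuous_coinduced_dom.2 hf⟩
  have hcoeff : fourierCoeff F = fourierCoeffOn hab f := by
    ext n
    rw [fourierCoeffOn_eq_integral, fourierCoeff_eq_intervalIntegral _ _ a, add_sub_cancel]
    rfl
  rw [← hcoeff] at hsum ⊢
  exact has_pointwise_sum_fourier_series_of_summable hsum x

end FourierCoeffOn

theorem fourier_coe_apply_of_eq_two_pi {T : ℝ} (hT : T = 2 * π) (n : ℤ) (x : ℝ) :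
    fourier n (x : AddCircle T) = Complex.exp (Complex.I * n * x) := by
  subst hT
  rw [fourier_coe_apply]
  congr 1
  push_cast
  field_simp

noncomputable def fourierLFun (ζ Θ : ℝ) : ℂ :=
  (‖1 + (ζ : ℂ) * Complex.exp (-Complex.I * Θ)‖ : ℂ) * (1 + (ζ : ℂ) * Complex.exp (-Complex.I * Θ))

theorem contDiff_fourierLFun (ζ : ℝ) : ContDiff ℝ 1 (fourierLFun ζ) := by
  have hg : ContDiff ℝ 1 fun Θ : ℝ => 1 + (ζ : ℂ) * Complex.exp (-Complex.I * Θ) :=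
    contDiff_const.add (contDiff_const.mul (contDiff_const.mul Complex.ofRealCLM.contDiff).cexp)
  convert contDiff_norm_smul_self.comp hg using 1
  ext Θ
  simp [fourierLFun, Complex.real_smul]

theorem periodic_fourierLFun (ζ : ℝ) : Periodic (fourierLFun ζ) (2 * π) := by
  intro Θ
  have h : Complex.exp (-Complex.I * ↑(Θ + 2 * π)) = Complex.exp (-Complex.I * Θ) := by
    rw [show -Complex.I * ↑(Θ + 2 * π) = -Complex.I * Θ - 2 * π * Complex.I by push_cast; ring,
      Complex.exp_sub, Complex.exp_two_pi_mul_I, div_one]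
  simp only [fourierLFun, h]

theorem fourierCoeffOn_fourierLFun (ζ : ℝ) :
    fourierCoeffOn two_pi_pos (fourierLFun ζ) = fun n => fourierL n ζ := by
  ext n
  rw [fourierCoeffOn_eq_integral, fourierL, sub_zero, Complex.real_smul]
  push_cast
  congr 1
  refine intervalIntegral.integral_congr fun Θ _ => ?_
  rw [fourier_coe_apply_of_eq_two_pi rfl, smul_eq_mul, fourierLFun]
  push_cast
  ring_nf

theorem stmt_17_general (ζ : ℝ) :
    Summable (fun n : ℤ => ‖fourierL n ζ‖)
      ∧ ∀ Θ : ℝ,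
        HasSum (fun n : ℤ => fourierL n ζ * Complex.exp (Complex.I * n * Θ))
          ((‖1 + (ζ : ℂ) * Complex.exp (-Complex.I * Θ)‖ : ℂ)
            * (1 + (ζ : ℂ) * Complex.exp (-Complex.I * Θ))) := by
  have hper : Periodic (fourierLFun ζ) (2 * π - 0) := by
    simpa using periodic_fourierLFun ζ
  have hsum := summable_norm_fourierCoeffOn_of_contDiff two_pi_pos (contDiff_fourierLFun ζ) hper
  rw [fourierCoeffOn_fourierLFun] at hsum
  refine ⟨hsum, fun Θ => ?_⟩
  have h := hasSum_fourierCoeffOn_of_summable two_pi_pos (contDiff_fourierLFun ζ).continuous hper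
    ((fourierCoeffOn_fourierLFun ζ).symm ▸ hsum.of_norm) Θ
  simp only [fourierCoeffOn_fourierLFun, fourier_coe_apply_of_eq_two_pi (sub_zero _),
    smul_eq_mul] at h
  exact h

theorem stmt_17 (ζ : ℝ) (hζ : 0 < ζ) :
    Summable (fun n : ℤ => ‖fourierL n ζ‖)
      ∧ ∀ Θ : ℝ,
        HasSum (fun n : ℤ => fourierL n ζ * Complex.exp (Complex.I * n * Θ))
          ((‖1 + (ζ : ℂ) * Complex.exp (-Complex.I * Θ)‖ : ℂ)
            * (1 + (ζ : ℂ) * Complex.exp (-Complex.I * Θ))) :=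
  stmt_17_general ζ
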